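/- For any real α, positive integers m and k, and all real x: (L_{m,m+k}^{III,α}(x))' / L_m^{-α-1}(-x) = -x·L_{k-3}^{α+3}(x) + (α+2-x)·L_{k-2}^{α+2}(x) + (m+1)·L_{k-1}^{α+1}(x), valid at all x where L_m^{-α-1}(-x) ≠ 0; equivalently, (L_{m,m+k}^{III,α}(x))' = [-x·L_{k-3}^{α+3}(x) + (α+2-x)·L_{k-2}^{α+2}(x) + (m+1)·L_{k-1}^{α+1}(x)]·L_m^{-α-1}(-x) as an identity of polynomials. -/

import Mathlib

/-! Write `L_n^α(x) = ∑_{k+d=n} c_α(k,d) x^k`. Shifting `k` gives `(L_n^α)' = -L_{n-1}^{α+1}`,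
and splitting the factor `n + 1 = k + d` in `(n+1) L_{n+1}^β` into an Euler-operator part and a
`d`-part gives the three-term recurrence
`(n+1) L_{n+1}^β(y) = (β+1-y) L_n^{β+1}(y) - y L_{n-1}^{β+2}(y)`.
In the product-rule expansion of `(L_{m,m+k}^{III,α})'`, every term carrying `L_{k-2}^{α+2}(x)`
collapses to `(α+2-x) L_m^{-α-1}(-x)` by this recurrence at `β = -α-2`, `y = -x`. -/

open Finset

/-- Generalized Laguerre polynomial `L_n^α(x) = ∑_{k=0}^n (-1)^k binom(n+α, n-k) x^k / k!`. -/
noncomputable def lag (α : ℝ) (n : ℕ) (x : ℝ) : ℝ :=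
  ∑ k ∈ Finset.range (n + 1),
    (-1 : ℝ) ^ k * (∏ j ∈ Finset.range (n - k), (α + (k : ℝ) + 1 + (j : ℝ))) /
      ((Nat.factorial (n - k) : ℝ) * (Nat.factorial k : ℝ)) * x ^ k

/-- Generalized Laguerre polynomial with integer index, with the convention
`L_n^α := 0` for `n < 0`. -/
noncomputable def lagZ (α : ℝ) (n : ℤ) (x : ℝ) : ℝ :=
  if 0 ≤ n then lag α n.toNat x else 0

/-- The Type III exceptional `X_m`-Laguerre polynomial of degree `m + k` (for `k ≥ 1`):
`L_{m,m+k}^{III,α}(x) = x L_{k-2}^{α+2}(x) L_m^{-α-1}(-x) + (m+1) L_{k-1}^{α+1}(x) L_{m+1}^{-α-2}(-x)`. -/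
noncomputable def LIII (α : ℝ) (m k : ℕ) (x : ℝ) : ℝ :=
  x * lagZ (α + 2) ((k : ℤ) - 2) x * lag (-α - 1) m (-x)
    + ((m : ℝ) + 1) * lag (α + 1) (k - 1) x * lag (-α - 2) (m + 1) (-x)

/-- `lagCoeff α k d` is the coefficient of `x ^ k` in `L_{k+d}^α`; indexing by the antidiagonal
`k + d = n` avoids truncated subtraction. -/
noncomputable def lagCoeff (α : ℝ) (k d : ℕ) : ℝ :=
  (-1 : ℝ) ^ k * (∏ j ∈ range d, (α + (k : ℝ) + 1 + (j : ℝ))) /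
    ((Nat.factorial d : ℝ) * (Nat.factorial k : ℝ))

theorem lag_eq_sum_antidiagonal (α : ℝ) (n : ℕ) (x : ℝ) :
    lag α n x = ∑ p ∈ antidiagonal n, lagCoeff α p.1 p.2 * x ^ p.1 := by
  rw [Nat.sum_antidiagonal_eq_sum_range_succ_mk]
  rfl

theorem succ_mul_lagCoeff_succ_left (α : ℝ) (k d : ℕ) :
    ((k : ℝ) + 1) * lagCoeff α (k + 1) d = -lagCoeff (α + 1) k d := by
  have hprod : ∏ j ∈ range d, (α + ((k + 1 : ℕ) : ℝ) + 1 + (j : ℝ))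
      = ∏ j ∈ range d, (α + 1 + (k : ℝ) + 1 + (j : ℝ)) :=
    prod_congr rfl fun j _ => by push_cast; ring
  rw [lagCoeff, lagCoeff, hprod, Nat.factorial_succ]
  push_cast
  field_simp
  ring

theorem succ_mul_lagCoeff_succ_right (α : ℝ) (k d : ℕ) :
    ((d : ℝ) + 1) * lagCoeff α k (d + 1) = (α + k + 1) * lagCoeff (α + 1) k d := by
  have hprod : ∏ j ∈ range (d + 1), (α + (k : ℝ) + 1 + (j : ℝ))
      = (∏ j ∈ range d, (α + 1 + (k : ℝ) + 1 + (j : ℝ))) * (α + k + 1) := by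
    rw [prod_range_succ']
    congr 1
    · exact prod_congr rfl fun j _ => by push_cast; ring
    · simp
  rw [lagCoeff, lagCoeff, hprod, Nat.factorial_succ]
  push_cast
  field_simp

theorem lagZ_natCast (α : ℝ) (n : ℕ) (x : ℝ) : lagZ α n x = lag α n x := by
  rw [lagZ, if_pos (Int.natCast_nonneg n), Int.toNat_natCast]

theorem lagZ_of_neg (α : ℝ) {n : ℤ} (hn : n < 0) (x : ℝ) : lagZ α n x = 0 :=
  if_neg hn.not_ge

theorem sum_antidiagonal_lagCoeff_mul_deriv_pow (α : ℝ) (n : ℕ) (x : ℝ) :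
    ∑ p ∈ antidiagonal n, lagCoeff α p.1 p.2 * ((p.1 : ℝ) * x ^ (p.1 - 1))
      = -lagZ (α + 1) ((n : ℤ) - 1) x := by
  rcases n with _ | n
  · simp [lagZ_of_neg]
  · rw [Nat.sum_antidiagonal_succ, Nat.cast_succ, add_sub_cancel_right, lagZ_natCast,
      lag_eq_sum_antidiagonal, ← sum_neg_distrib]
    simp only [Nat.cast_zero, zero_mul, mul_zero, zero_add, Nat.cast_succ, Nat.add_sub_cancel]
    refine sum_congr rfl fun p _ => ?_
    linear_combination x ^ p.1 * succ_mul_lagCoeff_succ_left α p.1 p.2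

theorem hasDerivAt_lag (α : ℝ) (n : ℕ) (x : ℝ) :
    HasDerivAt (lag α n) (-lagZ (α + 1) ((n : ℤ) - 1) x) x := by
  rw [← sum_antidiagonal_lagCoeff_mul_deriv_pow, funext (lag_eq_sum_antidiagonal α n)]
  exact HasDerivAt.fun_sum fun p _ => (hasDerivAt_pow p.1 x).const_mul _

theorem sum_antidiagonal_fst_mul_lagCoeff (α : ℝ) (n : ℕ) (x : ℝ) :
    ∑ p ∈ antidiagonal n, (p.1 : ℝ) * lagCoeff α p.1 p.2 * x ^ p.1
      = -x * lagZ (α + 1) ((n : ℤ) - 1) x := by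
  rw [neg_mul_comm, ← sum_antidiagonal_lagCoeff_mul_deriv_pow, mul_sum]
  refine sum_congr rfl fun p _ => ?_
  rcases p with ⟨_ | k, d⟩
  · simp
  · simp only [Nat.add_sub_cancel, pow_succ]
    ring

theorem sum_antidiagonal_snd_mul_lagCoeff (α : ℝ) (n : ℕ) (x : ℝ) :
    ∑ p ∈ antidiagonal (n + 1), (p.2 : ℝ) * lagCoeff α p.1 p.2 * x ^ p.1
      = (α + 1) * lag (α + 1) n x - x * lagZ (α + 2) ((n : ℤ) - 1) x := by
  have h := sum_antidiagonal_fst_mul_lagCoeff (α + 1) n x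
  rw [show α + 1 + 1 = α + 2 by ring] at h
  rw [Nat.sum_antidiagonal_succ', lag_eq_sum_antidiagonal, mul_sum, sub_eq_add_neg,
    neg_mul_eq_neg_mul, ← h, ← sum_add_distrib]
  simp only [Nat.cast_zero, zero_mul, zero_add, Nat.cast_succ]
  refine sum_congr rfl fun p _ => ?_
  linear_combination x ^ p.1 * succ_mul_lagCoeff_succ_right α p.1 p.2

theorem succ_mul_lag_succ (α : ℝ) (n : ℕ) (x : ℝ) :
    ((n : ℝ) + 1) * lag α (n + 1) x
      = (α + 1 - x) * lag (α + 1) n x - x * lagZ (α + 2) ((n : ℤ) - 1) x := by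
  have hsplit : ((n : ℝ) + 1) * lag α (n + 1) x
      = ∑ p ∈ antidiagonal (n + 1), (p.1 : ℝ) * lagCoeff α p.1 p.2 * x ^ p.1
        + ∑ p ∈ antidiagonal (n + 1), (p.2 : ℝ) * lagCoeff α p.1 p.2 * x ^ p.1 := by
    rw [lag_eq_sum_antidiagonal, mul_sum, ← sum_add_distrib]
    refine sum_congr rfl fun p hp => ?_
    have hn : ((n : ℝ) + 1) = p.1 + p.2 := by exact_mod_cast (mem_antidiagonal.1 hp).symm
    rw [hn]
    ring
  rw [hsplit, sum_antidiagonal_fst_mul_lagCoeff, sum_antidiagonal_snd_mul_lagCoeff,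
    Nat.cast_succ, add_sub_cancel_right, lagZ_natCast]
  ring

theorem hasDerivAt_lagZ (α : ℝ) (n : ℤ) (x : ℝ) :
    HasDerivAt (lagZ α n) (-lagZ (α + 1) (n - 1) x) x := by
  rcases lt_or_ge n 0 with hn | hn
  · rw [lagZ_of_neg _ (by omega), neg_zero, funext (lagZ_of_neg α hn)]
    exact hasDerivAt_const x 0
  · lift n to ℕ using hn
    rw [funext (lagZ_natCast α n)]
    exact hasDerivAt_lag α n x

theorem hasDerivAt_lag_sub_one (α : ℝ) (n : ℕ) (x : ℝ) :
    HasDerivAt (lag α (n - 1)) (-lagZ (α + 1) ((n : ℤ) - 2) x) x := by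
  rcases n with _ | n
  · rw [lagZ_of_neg _ (by omega)]
    simpa [lagZ_of_neg] using hasDerivAt_lag α 0 x
  · rw [show ((n + 1 : ℕ) : ℤ) - 2 = n - 1 by push_cast; ring]
    exact hasDerivAt_lag α n x

theorem hasDerivAt_lag_comp_neg (α : ℝ) (n : ℕ) (x : ℝ) :
    HasDerivAt (fun y => lag α n (-y)) (lagZ (α + 1) ((n : ℤ) - 1) (-x)) x := by
  simpa [Function.comp_def] using (hasDerivAt_lag α n (-x)).comp x (hasDerivAt_neg x)

theorem typeIII_deriv_rep_general (α : ℝ) (m k : ℕ) (x : ℝ) :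
    deriv (LIII α m k) x
      = (-x * lagZ (α + 3) ((k : ℤ) - 3) x + (α + 2 - x) * lagZ (α + 2) ((k : ℤ) - 2) x
          + ((m : ℝ) + 1) * lag (α + 1) (k - 1) x) * lag (-α - 1) m (-x) := by
  have hA := hasDerivAt_lagZ (α + 2) ((k : ℤ) - 2) x
  have hB := hasDerivAt_lag_comp_neg (-α - 1) m x
  have hC := hasDerivAt_lag_sub_one (α + 1) k x
  have hD := hasDerivAt_lag_comp_neg (-α - 2) (m + 1) x
  have hrec := succ_mul_lag_succ (-α - 2) m (-x)
  rw [show α + 2 + 1 = α + 3 by ring, show (k : ℤ) - 2 - 1 = k - 3 by ring] at hA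
  rw [show -α - 1 + 1 = -α by ring] at hB
  rw [show α + 1 + 1 = α + 2 by ring] at hC
  rw [show -α - 2 + 1 = -α - 1 by ring, Nat.cast_succ, add_sub_cancel_right, lagZ_natCast] at hD
  rw [show -α - 2 + 1 = -α - 1 by ring, show -α - 2 + 2 = -α by ring] at hrec
  have hL : HasDerivAt (LIII α m k) _ x :=
    (((hasDerivAt_id' x).fun_mul hA).fun_mul hB).add ((hC.const_mul ((m : ℝ) + 1)).fun_mul hD)
  rw [hL.deriv]
  linear_combination -lagZ (α + 2) ((k : ℤ) - 2) x * hrec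

/-- key derivative identity
`(L_{m,m+k}^{III,α}(x))' = (-x L_{k-3}^{α+3}(x) + (α+2-x) L_{k-2}^{α+2}(x)
  + (m+1) L_{k-1}^{α+1}(x)) · L_m^{-α-1}(-x)`, as an identity for all real `x`. -/
theorem typeIII_deriv_rep (α : ℝ) (m k : ℕ) (hm : 0 < m) (hk : 0 < k) (x : ℝ) :
    deriv (LIII α m k) x
      = (-x * lagZ (α + 3) ((k : ℤ) - 3) x + (α + 2 - x) * lagZ (α + 2) ((k : ℤ) - 2) x
          + ((m : ℝ) + 1) * lag (α + 1) (k - 1) x) * lag (-α - 1) m (-x) :=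
  typeIII_deriv_rep_general α m k x
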